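/- arXiv:2301.07134 — 5 statements merged into one kernel-verified Lean document; each statement's English description precedes it below -/
import Mathlib

section
/- For every natural number n ≥ 1 and every integer j with 0 ≤ j ≤ n/2, the sum of binomial coefficients C(n, i) for i = 0 to j is at most 2^(H(j/n)·n), where H(y) = -y·log₂(y) - (1-y)·log₂(1-y) is the binary entropy function (with H(0) interpreted as 0). -/
/-!
Put `p = j / n ≤ 1/2`. Every term `C(n,i) p^i (1-p)^(n-i)` with `i ≤ j` is at least
`C(n,i) p^j (1-p)^(n-j)`, because `p ≤ 1 - p`; and these terms are part of the binomial expansion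
of `(p + (1 - p))^n = 1`. Hence `∑_{i ≤ j} C(n,i) ≤ p^(-j) (1-p)^(-(n-j))`, and the right-hand
side is exactly `2^(H(p) n)`.
-/

/-- Binary entropy function (base-2), with `Real.logb 2 0 = 0` so `binEnt 0 = 0`. -/
noncomputable def binEnt (y : ℝ) : ℝ := -y * Real.logb 2 y - (1 - y) * Real.logb 2 (1 - y)

open Finset Real

lemma pow_mul_pow_sub_le_pow_mul_pow_sub {R : Type*} [CommSemiring R] [PartialOrder R]
    [IsOrderedRing R] {a b : R} (ha : 0 ≤ a) (hab : a ≤ b) {i j n : ℕ} (hij : i ≤ j)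
    (hjn : j ≤ n) : a ^ j * b ^ (n - j) ≤ a ^ i * b ^ (n - i) := by
  have hb : 0 ≤ b := ha.trans hab
  calc a ^ j * b ^ (n - j) = a ^ i * a ^ (j - i) * b ^ (n - j) := by
        rw [← pow_add, Nat.add_sub_cancel' hij]
    _ ≤ a ^ i * b ^ (j - i) * b ^ (n - j) := by gcongr
    _ = a ^ i * b ^ (n - i) := by
        rw [mul_assoc, ← pow_add, add_comm, Nat.sub_add_sub_cancel hjn hij]

lemma sum_range_choose_mul_pow_mul_pow_sub_le_one {p : ℝ} (hp0 : 0 ≤ p) (hp1 : p ≤ 1)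
    (n j : ℕ) (hjn : j ≤ n) :
    ∑ i ∈ range (j + 1), (n.choose i : ℝ) * (p ^ i * (1 - p) ^ (n - i)) ≤ 1 := by
  have hq : 0 ≤ 1 - p := sub_nonneg.mpr hp1
  calc ∑ i ∈ range (j + 1), (n.choose i : ℝ) * (p ^ i * (1 - p) ^ (n - i))
      ≤ ∑ i ∈ range (n + 1), (n.choose i : ℝ) * (p ^ i * (1 - p) ^ (n - i)) :=
        sum_le_sum_of_subset_of_nonneg (range_subset_range.mpr (by omega))
          fun _ _ _ ↦ by positivity
    _ = (p + (1 - p)) ^ n := by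
        rw [add_pow]
        exact sum_congr rfl fun _ _ ↦ by ring
    _ = 1 := by rw [add_sub_cancel, one_pow]

lemma sum_range_choose_le_inv {p : ℝ} (hp0 : 0 < p) (hp : p ≤ 1 / 2) {n j : ℕ} (hjn : j ≤ n) :
    ∑ i ∈ range (j + 1), (n.choose i : ℝ) ≤ (p ^ j * (1 - p) ^ (n - j))⁻¹ := by
  have hpq : p ≤ 1 - p := by linarith
  have hc : 0 < p ^ j * (1 - p) ^ (n - j) := by
    have : 0 < 1 - p := by linarith
    positivity
  rw [← one_div, le_div_iff₀ hc, sum_mul]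
  refine le_trans (sum_le_sum fun i hi ↦ ?_)
    (sum_range_choose_mul_pow_mul_pow_sub_le_one hp0.le (by linarith) n j hjn)
  exact mul_le_mul_of_nonneg_left (pow_mul_pow_sub_le_pow_mul_pow_sub hp0.le hpq
    (Nat.lt_succ_iff.mp (mem_range.mp hi)) hjn) (Nat.cast_nonneg _)

lemma two_rpow_logb_mul {p : ℝ} (hp : 0 < p) (y : ℝ) : (2 : ℝ) ^ (logb 2 p * y) = p ^ y := by
  rw [rpow_mul zero_le_two, rpow_logb zero_lt_two (by norm_num) hp]

lemma two_rpow_binEnt_mul {p : ℝ} (hp0 : 0 < p) (hp1 : p < 1) (x : ℝ) :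
    (2 : ℝ) ^ (binEnt p * x) = (p ^ (p * x) * (1 - p) ^ ((1 - p) * x))⁻¹ := by
  have hsplit : binEnt p * x = -(logb 2 p * (p * x)) + -(logb 2 (1 - p) * ((1 - p) * x)) := by
    unfold binEnt
    ring
  rw [hsplit, rpow_add zero_lt_two, rpow_neg zero_le_two, rpow_neg zero_le_two,
    two_rpow_logb_mul hp0, two_rpow_logb_mul (sub_pos.mpr hp1), mul_inv]

theorem stirling_binom_sum (n j : ℕ) (hn : 1 ≤ n) (hj : (j : ℝ) ≤ n / 2) :
    (∑ i ∈ Finset.range (j + 1), (n.choose i) : ℝ) ≤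
      2 ^ (binEnt ((j : ℝ) / n) * n) := by
  obtain rfl | hj0 := Nat.eq_zero_or_pos j
  · simp [binEnt]
  have hn0 : (0 : ℝ) < n := by exact_mod_cast hn
  have hjn : j ≤ n := by exact_mod_cast hj.trans (half_le_self hn0.le)
  set p : ℝ := j / n
  have hp0 : 0 < p := by positivity
  have hp : p ≤ 1 / 2 := by rw [div_le_iff₀ hn0]; linarith
  have hpn : p * n = j := div_mul_cancel₀ _ hn0.ne'
  have hqn : (1 - p) * n = ((n - j : ℕ) : ℝ) := by rw [Nat.cast_sub hjn, sub_mul, hpn, one_mul]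
  rw [two_rpow_binEnt_mul hp0 (by linarith), hpn, hqn, rpow_natCast, rpow_natCast]
  exact sum_range_choose_le_inv hp0 hp hjn
end

section
/- Let ℓ, m be positive integers with m ≤ ℓ, let u be an odd integer, and define h(y) = ((u·y) mod 2^ℓ) / 2^(ℓ-m) (integer division, i.e., keeping the top m bits). Then for any nonnegative integers y and z, h(y) + h(z) is congruent modulo 2^m to either h(y+z) or h(y+z) - 1. -/
/-! Since `2 ^ ℓ = 2 ^ (ℓ - m) * 2 ^ m`, the hash is `⌊u y / 2 ^ (ℓ - m)⌋ mod 2 ^ m`, so modulo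
`2 ^ m` it is just a floor quotient. Floor division by `d` is additive up to a carry:
`⌊(a + b) / d⌋` is `⌊a / d⌋ + ⌊b / d⌋` plus `0` or `1`. -/

/-- The multiplicative hash: top `m` bits of `u * y mod 2^ℓ`. -/
def mulHash (ℓ m u y : ℕ) : ℕ := (u * y % 2 ^ ℓ) / 2 ^ (ℓ - m)

theorem Nat.add_div_eq_div_add_div_or {a b d : ℕ} (hd : 0 < d) :
    (a + b) / d = a / d + b / d ∨ (a + b) / d = a / d + b / d + 1 := by
  by_cases hcarry : d ≤ a % d + b % d
  · exact Or.inr (Nat.add_div_eq_of_le_mod_add_mod hcarry hd)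
  · exact Or.inl (Nat.add_div_eq_of_add_mod_lt (Nat.lt_of_not_le hcarry))

theorem mulHash_eq_div_mod {ℓ m : ℕ} (hml : m ≤ ℓ) (u y : ℕ) :
    mulHash ℓ m u y = u * y / 2 ^ (ℓ - m) % 2 ^ m := by
  rw [mulHash, ← Nat.mod_mul_right_div_self, ← pow_add, Nat.sub_add_cancel hml]

theorem natCast_mulHash {ℓ m : ℕ} (hml : m ≤ ℓ) (u y : ℕ) :
    (mulHash ℓ m u y : ZMod (2 ^ m)) = ((u * y / 2 ^ (ℓ - m) : ℕ) : ZMod (2 ^ m)) := by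
  rw [mulHash_eq_div_mod hml, ZMod.natCast_mod]

theorem mulHash_pseudolinear_general (ℓ m u : ℕ) (hml : m ≤ ℓ)
    (y z : ℕ) :
    ((mulHash ℓ m u y + mulHash ℓ m u z : ℕ) : ZMod (2 ^ m)) =
        (mulHash ℓ m u (y + z) : ZMod (2 ^ m)) ∨
      ((mulHash ℓ m u y + mulHash ℓ m u z : ℕ) : ZMod (2 ^ m)) =
        (mulHash ℓ m u (y + z) : ZMod (2 ^ m)) - 1 := by
  push_cast
  simp only [natCast_mulHash hml, mul_add]
  rcases Nat.add_div_eq_div_add_div_or (a := u * y) (b := u * z) (pow_pos two_pos (ℓ - m))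
    with hsum | hsum
  · left
    rw [hsum, Nat.cast_add]
  · right
    rw [hsum, Nat.cast_add_one, Nat.cast_add, add_sub_cancel_right]

/-- Pseudolinearity: h(y) + h(z) ≡ h(y+z) or h(y+z) - 1 (mod 2^m). -/
theorem mulHash_pseudolinear (ℓ m u : ℕ) (hm : 0 < m) (hml : m ≤ ℓ) (hu : Odd u)
    (y z : ℕ) :
    ((mulHash ℓ m u y + mulHash ℓ m u z : ℕ) : ZMod (2 ^ m)) =
        (mulHash ℓ m u (y + z) : ZMod (2 ^ m)) ∨
      ((mulHash ℓ m u y + mulHash ℓ m u z : ℕ) : ZMod (2 ^ m)) =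
        (mulHash ℓ m u (y + z) : ZMod (2 ^ m)) - 1 :=
  mulHash_pseudolinear_general ℓ m u hml y z
end

section
/- Let ℓ, m be positive integers with m ≤ ℓ, and let u be drawn uniformly at random from the odd residues modulo 2^ℓ. Define h(y) = ((u·y) mod 2^ℓ) / 2^(ℓ-m) (integer division). Then for any two distinct integers y, z with 0 ≤ y, z < 2^ℓ, the probability that h(y) = h(z) is at most C·2^(-m) for some absolute constant C (one may take C = 4). -/
open Finset

namespace Nat

theorem lt_add_of_div_eq_div {K x y : ℕ} (hK : 0 < K) (h : x / K = y / K) : x < y + K :=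
  calc x < x / K * K + K := Nat.lt_div_mul_add hK
    _ = y / K * K + K := by rw [h]
    _ ≤ y + K := by gcongr; exact Nat.div_mul_le_self y K

theorem mod_lt_or_sub_lt_mod_of_add_mod_div_eq {N K b c : ℕ} (hN : 0 < N) (hK : 0 < K)
    (h : (b + c) % N / K = b % N / K) : c % N < K ∨ N - K < c % N := by
  have hup := lt_add_of_div_eq_div hK h
  have hdown := lt_add_of_div_eq_div hK h.symm
  have hb := Nat.mod_lt b hN
  have hc := Nat.mod_lt c hN
  rw [Nat.add_mod_eq_ite] at hup hdown
  split_ifs at hup hdown <;> omega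

theorem card_filter_mul_mod_mem_le (N d : ℕ) (S : Finset ℕ) :
    #{u ∈ range N | u * d % N ∈ S} ≤ N.gcd d * #S := by
  rcases N.eq_zero_or_pos with rfl | hN
  · simp
  set M := N / N.gcd d
  have hgM : N.gcd d * M = N := Nat.mul_div_cancel' (Nat.gcd_dvd_left N d)
  have hM : 0 < M := Nat.pos_of_mul_pos_left (hgM ▸ hN)
  refine card_le_mul_card_image_of_maps_to (f := fun u => u * d % N)
    (fun u hu => (mem_filter.1 hu).2) _ fun c _ => ?_
  -- multipliers with the same image are congruent mod `M`, so they differ in their quotient by `M`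
  calc #{u ∈ {u ∈ range N | u * d % N ∈ S} | u * d % N = c}
      ≤ #(range (N.gcd d)) := by
        refine card_le_card_of_injOn (· / M) (fun u hu => ?_) fun u hu v hv huv => ?_
        · simp only [mem_coe, mem_filter, mem_range] at hu ⊢
          rw [Nat.div_lt_iff_lt_mul hM, hgM]
          exact hu.1.1
        · simp only [mem_coe, mem_filter] at hu hv
          have hdvd : d * u ≡ d * v [MOD N] := by
            rw [Nat.ModEq, mul_comm d, mul_comm d, hu.2, hv.2]
          have hmod : u ≡ v [MOD M] := Nat.ModEq.cancel_left_div_gcd hN hdvd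
          rw [← Nat.div_add_mod u M, ← Nat.div_add_mod v M, hmod, show u / M = v / M from huv]
    _ = N.gcd d := card_range _

theorem card_filter_mod_two_eq_one_range (n : ℕ) : #{u ∈ range n | u % 2 = 1} = n / 2 := by
  rw [← Nat.card_multiples n 2]
  congr 1
  exact filter_congr fun u _ => by omega

end Nat

def nearZeroMultiples (N K g : ℕ) : Finset ℕ :=
  {x ∈ Ioc 0 K | g ∣ x} ∪ {x ∈ Ioc 0 K | g ∣ x}.image (N - ·)

theorem card_nearZeroMultiples_le (N K g : ℕ) : #(nearZeroMultiples N K g) ≤ 2 * (K / g) :=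
  calc #(nearZeroMultiples N K g) ≤ #{x ∈ Ioc 0 K | g ∣ x} + #{x ∈ Ioc 0 K | g ∣ x} :=
        (card_union_le _ _).trans (Nat.add_le_add_left card_image_le _)
    _ = 2 * (K / g) := by rw [Nat.Ioc_filter_dvd_card_eq_div]; ring

theorem mem_nearZeroMultiples {N K g c : ℕ} (hgN : g ∣ N) (hgc : g ∣ c) (hc0 : c ≠ 0)
    (hcN : c < N) (hclose : c < K ∨ N - K < c) : c ∈ nearZeroMultiples N K g := by
  rcases hclose with h | h
  · exact mem_union_left _ (mem_filter.2 ⟨mem_Ioc.2 ⟨by omega, h.le⟩, hgc⟩)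
  · exact mem_union_right _ (mem_image.2
      ⟨N - c, mem_filter.2 ⟨mem_Ioc.2 ⟨by omega, by omega⟩, Nat.dvd_sub hgN hgc⟩, by omega⟩)

theorem mul_sub_mod_mem_nearZeroMultiples_of_mulHash_eq {ℓ m u y z : ℕ} (hzy : z < y)
    (hy : y < 2 ^ ℓ) (hu : u % 2 = 1) (h : mulHash ℓ m u y = mulHash ℓ m u z) :
    u * (y - z) % 2 ^ ℓ ∈ nearZeroMultiples (2 ^ ℓ) (2 ^ (ℓ - m)) ((2 ^ ℓ).gcd (y - z)) := by
  have hN : 0 < 2 ^ ℓ := by positivity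
  have hcop : (2 ^ ℓ).Coprime u := (Nat.coprime_two_left.2 (Nat.odd_iff.2 hu)).pow_left ℓ
  refine mem_nearZeroMultiples (Nat.gcd_dvd_left _ _)
    ((Nat.dvd_mod_iff (Nat.gcd_dvd_left _ _)).2 (dvd_mul_of_dvd_right (Nat.gcd_dvd_right _ _) u))
    (fun h0 => ?_) (Nat.mod_lt _ hN)
    (Nat.mod_lt_or_sub_lt_mod_of_add_mod_div_eq (b := u * z) hN (by positivity) ?_)
  · have hdvd := hcop.dvd_mul_left.1 (Nat.dvd_of_mod_eq_zero h0)
    exact absurd (Nat.le_of_dvd (by omega) hdvd) (by omega)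
  · rwa [← mul_add, Nat.add_sub_cancel' hzy.le]

theorem card_mulHash_collisions_le {ℓ m y z : ℕ} (hzy : z < y) (hy : y < 2 ^ ℓ) :
    #{u ∈ {u ∈ range (2 ^ ℓ) | u % 2 = 1} | mulHash ℓ m u y = mulHash ℓ m u z} ≤
      2 * 2 ^ (ℓ - m) := by
  set g := (2 ^ ℓ).gcd (y - z)
  set S := nearZeroMultiples (2 ^ ℓ) (2 ^ (ℓ - m)) g
  have hsub : {u ∈ {u ∈ range (2 ^ ℓ) | u % 2 = 1} | mulHash ℓ m u y = mulHash ℓ m u z} ⊆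
      {u ∈ range (2 ^ ℓ) | u * (y - z) % 2 ^ ℓ ∈ S} := fun u hu => by
    simp only [mem_filter] at hu ⊢
    exact ⟨hu.1.1, mul_sub_mod_mem_nearZeroMultiples_of_mulHash_eq hzy hy hu.1.2 hu.2⟩
  calc _ ≤ #{u ∈ range (2 ^ ℓ) | u * (y - z) % 2 ^ ℓ ∈ S} := card_le_card hsub
    _ ≤ g * #S := Nat.card_filter_mul_mod_mem_le _ _ _
    _ ≤ g * (2 * (2 ^ (ℓ - m) / g)) := by gcongr; exact card_nearZeroMultiples_le _ _ _
    _ ≤ 2 * 2 ^ (ℓ - m) := by rw [mul_left_comm]; gcongr; exact Nat.mul_div_le _ g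

/-- Pseudouniversality: for a uniformly random odd multiplier `u` modulo `2^ℓ`,
the probability that two distinct `ℓ`-bit values hash to the same `m`-bit value
is at most `4 / 2^m`. -/
theorem mulHash_pseudouniversal (ℓ m : ℕ) (hm : 0 < m) (hml : m ≤ ℓ)
    (y z : ℕ) (hy : y < 2 ^ ℓ) (hz : z < 2 ^ ℓ) (hne : y ≠ z) :
    ((((Finset.range (2 ^ ℓ)).filter (fun u => u % 2 = 1)).filter
        (fun u => mulHash ℓ m u y = mulHash ℓ m u z)).card : ℝ) /
      (((Finset.range (2 ^ ℓ)).filter (fun u => u % 2 = 1)).card : ℝ) ≤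
      4 / 2 ^ m := by
  wlog hzy : z < y generalizing y z
  · simpa only [eq_comm] using this z y hz hy hne.symm (by omega)
  obtain ⟨k, rfl⟩ : ∃ k, ℓ = k + 1 := ⟨ℓ - 1, by omega⟩
  have hodd : #{u ∈ range (2 ^ (k + 1)) | u % 2 = 1} = 2 ^ k := by
    rw [Nat.card_filter_mod_two_eq_one_range, pow_succ, Nat.mul_div_cancel _ two_pos]
  have hcount : #{u ∈ {u ∈ range (2 ^ (k + 1)) | u % 2 = 1} |
      mulHash (k + 1) m u y = mulHash (k + 1) m u z} * 2 ^ m ≤ 4 * 2 ^ k :=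
    calc _ ≤ 2 * 2 ^ (k + 1 - m) * 2 ^ m :=
          Nat.mul_le_mul_right _ (card_mulHash_collisions_le hzy hy)
      _ = 4 * 2 ^ k := by rw [mul_assoc, ← pow_add, Nat.sub_add_cancel hml, pow_succ]; ring
  rw [hodd, div_le_div_iff₀ (by positivity) (by positivity)]
  exact_mod_cast hcount
end

section
/- Fix a set Y of distinct ℓ-bit integers with |Y| ≤ ℓ^(β/2) for some constant β > 0, and suppose the set P of primes in the interval [ℓ^(1+β/2), 2ℓ^(1+β/2)] has size at least ℓ^(1+β/2)/((1+β/2)·log₂ ℓ). Then for a uniformly random prime p from P, with probability at least 3/4, the residue set (Y mod p) has size at least c·|Y| for some absolute constant c > 0 (for all sufficiently large ℓ). -/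
/-!
Count collisions. A pair `y ≠ z` of `ℓ`-bit integers collides modulo a prime `p` only if `p`
divides `y - z`, a nonzero integer below `2 ^ ℓ`; it has at most `ℓ / log₂ (ℓ ^ (1 + β/2))`
prime divisors that large. By the density of `P` and `|Y| ≤ ℓ ^ (β/2)`, the average number of
colliding ordered pairs (diagonal included) over `p ∈ P` is then at most `2|Y|`, so by Markov at
most a quarter of the primes have more than `8|Y|` of them. For the others, Cauchy–Schwarz over
the fibres of `y ↦ y mod p` gives `|Y|² ≤ |Y mod p| · 8|Y|`.
-/

open Finset

section Collisions

variable {ι α β : Type*} [DecidableEq β]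

def collisions (s : Finset α) (f : α → β) : Finset (α × α) :=
  {q ∈ s ×ˢ s | f q.1 = f q.2}

lemma card_collisions_eq_sum_sq (s : Finset α) (f : α → β) :
    #(collisions s f) = ∑ r ∈ s.image f, #{a ∈ s | f a = r} ^ 2 := by
  rw [collisions, card_eq_sum_card_fiberwise (f := fun q => f q.1) (t := s.image f)
    fun q hq => mem_image_of_mem f (mem_product.1 (mem_filter.1 hq).1).1]
  refine sum_congr rfl fun r _ => ?_
  rw [sq, ← card_product]
  congr 1
  ext ⟨a, b⟩
  simp only [mem_filter, mem_product]
  constructor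
  · rintro ⟨⟨⟨ha, hb⟩, hab⟩, rfl⟩
    exact ⟨⟨ha, rfl⟩, hb, hab.symm⟩
  · rintro ⟨⟨ha, rfl⟩, hb, hba⟩
    exact ⟨⟨⟨ha, hb⟩, hba.symm⟩, rfl⟩

lemma sq_card_le_card_image_mul_card_collisions (s : Finset α) (f : α → β) :
    #s ^ 2 ≤ #(s.image f) * #(collisions s f) :=
  calc #s ^ 2 = (∑ r ∈ s.image f, #{a ∈ s | f a = r}) ^ 2 := by rw [card_eq_sum_card_image f s]
    _ ≤ #(s.image f) * ∑ r ∈ s.image f, #{a ∈ s | f a = r} ^ 2 := sq_sum_le_card_mul_sum_sq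
    _ = #(s.image f) * #(collisions s f) := by rw [card_collisions_eq_sum_sq]

lemma card_le_mul_card_image_of_card_collisions_le {s : Finset α} {f : α → β} {k : ℕ}
    (h : #(collisions s f) ≤ k * #s) : #s ≤ k * #(s.image f) := by
  rcases s.eq_empty_or_nonempty with rfl | hs
  · simp
  refine Nat.le_of_mul_le_mul_right ?_ hs.card_pos
  calc #s * #s = #s ^ 2 := (sq _).symm
    _ ≤ #(s.image f) * #(collisions s f) := sq_card_le_card_image_mul_card_collisions s f
    _ ≤ #(s.image f) * (k * #s) := by gcongr
    _ = k * #(s.image f) * #s := by ring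

lemma sum_card_collisions_le [DecidableEq α] {s : Finset α} {P : Finset ι} {f : ι → α → β}
    (hsparse : ∀ a ∈ s, ∀ b ∈ s, a ≠ b → #s * #{i ∈ P | f i a = f i b} ≤ #P) :
    ∑ i ∈ P, #(collisions s (f i)) ≤ 2 * #s * #P := by
  have hswap : ∑ i ∈ P, #(collisions s (f i))
      = ∑ q ∈ s ×ˢ s, #{i ∈ P | f i q.1 = f i q.2} := by
    simp only [collisions, card_filter]
    exact sum_comm
  have hdiag : ∑ q ∈ s.diag, #{i ∈ P | f i q.1 = f i q.2} ≤ #s * #P :=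
    (sum_le_card_nsmul s.diag _ #P fun q _ => card_filter_le _ _).trans_eq
      (by rw [diag_card, smul_eq_mul])
  have hoffDiag : ∑ q ∈ s.offDiag, #{i ∈ P | f i q.1 = f i q.2} ≤ #s * #P := by
    rcases s.eq_empty_or_nonempty with rfl | hs
    · simp
    refine Nat.le_of_mul_le_mul_left ?_ hs.card_pos
    calc #s * ∑ q ∈ s.offDiag, #{i ∈ P | f i q.1 = f i q.2}
        = ∑ q ∈ s.offDiag, #s * #{i ∈ P | f i q.1 = f i q.2} := mul_sum _ _ _
      _ ≤ #s.offDiag * #P := sum_le_card_nsmul _ _ _ fun q hq => by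
          obtain ⟨ha, hb, hab⟩ := mem_offDiag.1 hq
          exact hsparse _ ha _ hb hab
      _ ≤ #s * (#s * #P) := by
          rw [← mul_assoc]
          gcongr
          rw [offDiag_card]
          exact Nat.sub_le _ _
  rw [hswap, ← diag_union_offDiag, sum_union (disjoint_diag_offDiag s)]
  linarith

lemma three_mul_card_le_four_mul_card_filter_card_le_eight_mul_card_image
    [DecidableEq α] {s : Finset α} {P : Finset ι} {f : ι → α → β}
    (hsparse : ∀ a ∈ s, ∀ b ∈ s, a ≠ b → #s * #{i ∈ P | f i a = f i b} ≤ #P) :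
    3 * #P ≤ 4 * #{i ∈ P | #s ≤ 8 * #(s.image (f i))} := by
  let bad := {i ∈ P | 8 * #s < #(collisions s (f i))}
  have hbad : 4 * #bad ≤ #P := by
    have hmarkov : #bad * (8 * #s + 1) ≤ 2 * #s * #P :=
      calc #bad * (8 * #s + 1) ≤ ∑ i ∈ bad, #(collisions s (f i)) := by
            rw [← smul_eq_mul]
            exact card_nsmul_le_sum _ _ _ fun i hi => (mem_filter.1 hi).2
        _ ≤ ∑ i ∈ P, #(collisions s (f i)) := sum_le_sum_of_subset (filter_subset _ _)
        _ ≤ 2 * #s * #P := sum_card_collisions_le hsparse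
    refine Nat.le_of_mul_le_mul_right (c := 8 * #s + 1) ?_ (by omega)
    nlinarith
  have hgood : {i ∈ P | ¬ 8 * #s < #(collisions s (f i))}
      ⊆ {i ∈ P | #s ≤ 8 * #(s.image (f i))} := by
    intro i hi
    rw [mem_filter] at hi ⊢
    exact ⟨hi.1, card_le_mul_card_image_of_card_collisions_le (by rw [mul_comm]; omega)⟩
  have hsplit : #bad + #{i ∈ P | ¬ 8 * #s < #(collisions s (f i))} = #P :=
    card_filter_add_card_filter_not _
  have := card_le_card hgood
  omega

end Collisions

lemma pow_card_le_natAbs_of_forall_prime_dvd {S : Finset ℕ} {d : ℤ} (hd : d ≠ 0) {A : ℝ}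
    (hA : 0 ≤ A) (hS : ∀ p ∈ S, p.Prime ∧ A ≤ p ∧ (p : ℤ) ∣ d) : A ^ #S ≤ d.natAbs :=
  calc A ^ #S = ∏ _p ∈ S, A := (prod_const A).symm
    _ ≤ ∏ p ∈ S, (p : ℝ) := prod_le_prod (fun _ _ => hA) fun p hp => (hS p hp).2.1
    _ = ((∏ p ∈ S, p : ℕ) : ℝ) := by push_cast; rfl
    _ ≤ d.natAbs :=
        Nat.cast_le.2 (Nat.le_of_dvd (Int.natAbs_pos.2 hd) (prod_primes_dvd _
          (fun p hp => (hS p hp).1.prime) fun p hp => Int.natCast_dvd.1 (hS p hp).2.2))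

lemma card_filter_emod_eq_mul_logb_le {P : Finset ℕ} {A : ℝ} (hA : 1 < A)
    (hP : ∀ p ∈ P, p.Prime ∧ A ≤ p) {ℓ : ℕ} {y z : ℤ} (hyz : y ≠ z) (hdist : |y - z| < 2 ^ ℓ) :
    #(P.filter fun p : ℕ => y % (p : ℤ) = z % (p : ℤ)) * Real.logb 2 A ≤ ℓ := by
  have hpow : A ^ #(P.filter fun p : ℕ => y % (p : ℤ) = z % (p : ℤ)) < 2 ^ ℓ := by
    refine (pow_card_le_natAbs_of_forall_prime_dvd (sub_ne_zero.2 hyz) (by linarith)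
      fun p hp => ?_).trans_lt ?_
    · obtain ⟨hpP, hmod⟩ := mem_filter.1 hp
      exact ⟨(hP p hpP).1, (hP p hpP).2, Int.ModEq.dvd hmod.symm⟩
    · have hnatAbs : ((y - z).natAbs : ℤ) < 2 ^ ℓ := by rwa [Int.natCast_natAbs]
      exact_mod_cast hnatAbs
  have := Real.logb_le_logb_of_le one_lt_two (pow_pos (by linarith) _) hpow.le
  rwa [Real.logb_pow, Real.logb_pow, Real.logb_self_eq_one one_lt_two, mul_one] at this

lemma card_mul_card_filter_emod_eq_le {P : Finset ℕ} {A : ℝ} (hA : 1 < A)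
    (hP : ∀ p ∈ P, p.Prime ∧ A ≤ p) (hPcard : A ≤ #P * Real.logb 2 A) {ℓ : ℕ} {Y : Finset ℤ}
    (hY : ∀ y ∈ Y, 0 ≤ y ∧ y < 2 ^ ℓ) (hYcard : #Y * ℓ ≤ A) :
    ∀ y ∈ Y, ∀ z ∈ Y, y ≠ z → #Y * #(P.filter fun p : ℕ => y % (p : ℤ) = z % (p : ℤ)) ≤ #P := by
  intro y hy z hz hyz
  set k := #(P.filter fun p : ℕ => y % (p : ℤ) = z % (p : ℤ))
  have hk : k * Real.logb 2 A ≤ ℓ := card_filter_emod_eq_mul_logb_le hA hP hyz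
    (abs_sub_lt_iff.2 ⟨by linarith [hY y hy, hY z hz], by linarith [hY y hy, hY z hz]⟩)
  have hlogA : 0 < Real.logb 2 A := Real.logb_pos one_lt_two hA
  refine Nat.cast_le.1 (le_of_mul_le_mul_right ?_ hlogA)
  calc ((#Y * k : ℕ) : ℝ) * Real.logb 2 A = #Y * (k * Real.logb 2 A) := by push_cast; ring
    _ ≤ #Y * ℓ := by gcongr
    _ ≤ #P * Real.logb 2 A := hYcard.trans hPcard

open scoped Classical in
/-- With probability at least 3/4 over a random prime `p` from the dense set `P`
of primes in `[ℓ^(1+β/2), 2ℓ^(1+β/2)]`, the residue set `(Y mod p)` has size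
`Ω(|Y|)`, for any set `Y` of at most `ℓ^(β/2)` distinct `ℓ`-bit integers
(for all sufficiently large `ℓ`). -/
theorem residues_large_whp (β : ℝ) (hβ : 0 < β) :
    ∃ c : ℝ, 0 < c ∧ ∃ ℓ₀ : ℕ, ∀ ℓ : ℕ, ℓ₀ ≤ ℓ →
      ∀ Y : Finset ℤ, (∀ y ∈ Y, 0 ≤ y ∧ y < 2 ^ ℓ) →
        ((Y.card : ℝ) ≤ (ℓ : ℝ) ^ (β / 2)) →
      ∀ P : Finset ℕ,
        (∀ p : ℕ, p ∈ P ↔ Nat.Prime p ∧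
          (ℓ : ℝ) ^ (1 + β / 2) ≤ (p : ℝ) ∧ (p : ℝ) ≤ 2 * (ℓ : ℝ) ^ (1 + β / 2)) →
        ((ℓ : ℝ) ^ (1 + β / 2) / ((1 + β / 2) * Real.logb 2 ℓ) ≤ (P.card : ℝ)) →
        (3 / 4 : ℝ) * (P.card : ℝ) ≤
          ((P.filter (fun p : ℕ =>
            c * (Y.card : ℝ) ≤ ((Y.image (fun y => y % (p : ℤ))).card : ℝ))).card : ℝ) := by
  refine ⟨1 / 8, by norm_num, 2, fun ℓ hℓ Y hY hYcard P hP hPcard => ?_⟩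
  have hℓ : (1 : ℝ) < ℓ := by exact_mod_cast hℓ
  set A : ℝ := (ℓ : ℝ) ^ (1 + β / 2)
  have hA : 1 < A := Real.one_lt_rpow hℓ (by linarith)
  have hAP : A ≤ #P * Real.logb 2 A := by
    rw [← div_le_iff₀ (Real.logb_pos one_lt_two hA),
      Real.logb_rpow_eq_mul_logb_of_pos (by positivity)]
    exact hPcard
  have hYA : #Y * (ℓ : ℝ) ≤ A :=
    calc #Y * (ℓ : ℝ) ≤ (ℓ : ℝ) ^ (β / 2) * ℓ := by gcongr
      _ = A := by rw [← Real.rpow_add_one (by positivity), add_comm]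
  have hsparse := card_mul_card_filter_emod_eq_le hA
    (fun p hp => ((hP p).1 hp).imp_right And.left) hAP hY hYA
  have hmain := three_mul_card_le_four_mul_card_filter_card_le_eight_mul_card_image
    (f := fun (p : ℕ) (y : ℤ) => y % (p : ℤ)) hsparse
  have hiff : ∀ p ∈ P, (1 / 8 : ℝ) * #Y ≤ #(Y.image fun y => y % (p : ℤ)) ↔
      #Y ≤ 8 * #(Y.image fun y => y % (p : ℤ)) := by
    intro p _
    rw [one_div_mul_eq_div, div_le_iff₀ (by norm_num), mul_comm]
    norm_cast
  rw [filter_congr hiff]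
  have := (Nat.cast_le (α := ℝ)).2 hmain
  push_cast at this
  linarith
end

section
/- Let Y be a finite multiset of n integers, let p be a modulus, and suppose the residue set (Y mod p) has size greater than 4^k for some positive integer k ≤ |Y|. Then there exists a subset C ⊆ Y with |C| = k such that all 2^k subset sums of C are pairwise distinct modulo p, i.e., |W(C) mod p| = 2^k. -/
private lemma emod_cancel_left' {p y a b : ℤ} (h : (y + a) % p = (y + b) % p) :
    a % p = b % p := Int.ModEq.add_left_cancel' y h

/-- If the elements of `Y` fall into more than `4^k` residue classes modulo `p`,
then there is a size-`k` sub-multiset `C ⊆ Y` all of whose `2^k` subset sums are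
pairwise distinct modulo `p`. -/
theorem exists_subset_distinct_sums_mod (Y : Multiset ℤ) (p k : ℕ)
    (hp : 0 < p) (hk : 0 < k) (hkY : k ≤ Multiset.card Y)
    (h : 4 ^ k < (Y.toFinset.image (fun y => y % (p : ℤ))).card) :
    ∃ C ≤ Y, Multiset.card C = k ∧
      ((C.powerset.map (fun T => T.sum % (p : ℤ))).toFinset).card = 2 ^ k := by
  have main : ∀ i, i ≤ k → ∃ C ≤ Y, Multiset.card C = i ∧
      (C.powerset.map (fun T => T.sum % (p : ℤ))).Nodup := by
    intro i
    induction i with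
    | zero => intro _; exact ⟨0, Multiset.zero_le Y, rfl, by simp⟩
    | succ i ih =>
      intro hi
      obtain ⟨C, hCY, hcard, hnodup⟩ := ih (Nat.le_of_succ_le hi)
      set S : Finset ℤ := (C.powerset.map Multiset.sum).toFinset with hS
      have hmemS : ∀ T : Multiset ℤ, T ≤ C → T.sum ∈ S := by
        intro T hT
        simp only [hS, Multiset.mem_toFinset, Multiset.mem_map]
        exact ⟨T, Multiset.mem_powerset.2 hT, rfl⟩
      set D : Finset ℤ := Finset.image (fun q : ℤ × ℤ => (q.1 - q.2) % (p : ℤ)) (S ×ˢ S)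
        with hD
      have hDcard : D.card ≤ 4 ^ k := by
        have hScard : S.card ≤ 2 ^ i := by
          calc S.card ≤ Multiset.card (C.powerset.map Multiset.sum) :=
                Multiset.toFinset_card_le _
            _ = 2 ^ i := by rw [Multiset.card_map, Multiset.card_powerset, hcard]
        calc D.card ≤ (S ×ˢ S).card := Finset.card_image_le
          _ = S.card * S.card := Finset.card_product _ _
          _ ≤ 2 ^ i * 2 ^ i := Nat.mul_le_mul hScard hScard
          _ = 4 ^ i := by rw [← Nat.mul_pow]
          _ ≤ 4 ^ k := Nat.pow_le_pow_right (by norm_num) (Nat.le_of_succ_le hi)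
      -- find a fresh element
      have hne : ((Y.toFinset.image (fun y => y % (p : ℤ))) \ D).Nonempty := by
        apply Finset.card_pos.1
        have := Finset.le_card_sdiff D (Y.toFinset.image (fun y => y % (p : ℤ)))
        omega
      obtain ⟨r, hr⟩ := hne
      rw [Finset.mem_sdiff] at hr
      obtain ⟨hrR, hrD⟩ := hr
      rw [Finset.mem_image] at hrR
      obtain ⟨y, hyY, hyr⟩ := hrR
      rw [Multiset.mem_toFinset] at hyY
      have hyD : (y % (p : ℤ)) ∉ D := hyr ▸ hrD
      -- y is not in C
      have hyC : y ∉ C := by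
        intro hyC
        apply hyD
        rw [hD, Finset.mem_image]
        refine ⟨(y, 0), Finset.mem_product.2 ⟨?_, ?_⟩, by simp⟩
        · have := hmemS {y} (Multiset.singleton_le.2 hyC)
          simpa using this
        · have := hmemS 0 (Multiset.zero_le C)
          simpa using this
      -- y ::ₘ C ≤ Y
      have hle : y ::ₘ C ≤ Y := by
        rw [Multiset.le_iff_count]
        intro a
        rw [Multiset.count_cons]
        by_cases hay : a = y
        · subst hay
          have h1 : Multiset.count a C = 0 := Multiset.count_eq_zero_of_notMem hyC
          have h2 : 1 ≤ Multiset.count a Y := Multiset.one_le_count_iff_mem.2 hyY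
          simp [h1]
          omega
        · simp only [hay, if_false, add_zero]
          exact Multiset.le_iff_count.1 hCY a
      refine ⟨y ::ₘ C, hle, by simp [hcard], ?_⟩
      rw [Multiset.powerset_cons, Multiset.map_add, Multiset.nodup_add]
      have hcross : ∀ T₁ T₂ : Multiset ℤ, T₁ ≤ C → T₂ ≤ C →
          T₁.sum % (p : ℤ) ≠ (y + T₂.sum) % (p : ℤ) := by
        intro T₁ T₂ hT₁ hT₂ heq
        apply hyD
        have hmod : T₁.sum ≡ y + T₂.sum [ZMOD (p : ℤ)] := heq
        have h2 := hmod.sub_right T₂.sum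
        rw [add_sub_cancel_right] at h2
        rw [hD, Finset.mem_image]
        exact ⟨(T₁.sum, T₂.sum), Finset.mem_product.2 ⟨hmemS _ hT₁, hmemS _ hT₂⟩, h2⟩
      refine ⟨hnodup, ?_, ?_⟩
      · rw [Multiset.map_map]
        have heq : ((fun T : Multiset ℤ => T.sum % (p : ℤ)) ∘ Multiset.cons y)
            = (fun r : ℤ => (y + r) % (p : ℤ)) ∘ (fun T : Multiset ℤ => T.sum % (p : ℤ)) := by
          funext T
          simp only [Function.comp_apply, Multiset.sum_cons]
          exact (Int.ModEq.add_left y (Int.emod_emod_of_dvd _ dvd_rfl)).symm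
        rw [heq, ← Multiset.map_map]
        refine Multiset.Nodup.map_on ?_ hnodup
        intro a ha b hb hab
        rw [Multiset.mem_map] at ha hb
        obtain ⟨T₁, _, ha⟩ := ha
        obtain ⟨T₂, _, hb⟩ := hb
        have h1 : a % (p : ℤ) = b % (p : ℤ) := emod_cancel_left' hab
        rw [← ha, ← hb] at h1 ⊢
        rw [Int.emod_emod_of_dvd _ dvd_rfl, Int.emod_emod_of_dvd _ dvd_rfl] at h1
        exact h1
      · rw [Multiset.disjoint_left]
        intro a ha hb
        rw [Multiset.mem_map] at ha
        rw [Multiset.map_map, Multiset.mem_map] at hb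
        obtain ⟨T₁, hT₁, ha⟩ := ha
        obtain ⟨T₂, hT₂, hb⟩ := hb
        rw [Multiset.mem_powerset] at hT₁ hT₂
        simp only [Function.comp_apply, Multiset.sum_cons] at hb
        refine hcross T₁ T₂ hT₁ hT₂ ?_
        first
        | exact ha.trans hb | exact ha.trans hb.symm
        | exact ha.symm.trans hb | exact ha.symm.trans hb.symm
  obtain ⟨C, hCY, hcard, hnodup⟩ := main k le_rfl
  refine ⟨C, hCY, hcard, ?_⟩
  rw [Multiset.toFinset_card_of_nodup hnodup, Multiset.card_map,
    Multiset.card_powerset, hcard]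
end
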